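/- arXiv:2504.03996 — 2 statements merged into one kernel-verified Lean document; each statement's English description precedes it below -/
import Mathlib

section
/- A twice continuously differentiable function f : ℝⁿ → ℝ satisfies f(x) + f(y) ≥ f(x ∨ y) + f(x ∧ y) for all x, y (submodularity) if and only if all mixed second partial derivatives ∂²f/∂xᵢ∂xⱼ with i ≠ j are nonpositive everywhere. -/
/-!
Submodularity says exactly that the second difference `f (a + u + v) + f a - f (a + u) - f (a + v)`
is nonpositive whenever `u ⊓ v = 0`, i.e. `u, v ≥ 0` with disjoint supports. For such `u, v` the
expansion `D²f q u v = ∑ uᵢ vⱼ ∂ᵢ∂ⱼf q` only involves mixed partials, so nonpositive mixed partials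
give `D²f q u v ≤ 0`, and the mean value theorem, applied once in the direction `u` and once in
the direction `v`, bounds the second difference. Conversely, for `u = t eᵢ`, `v = t eⱼ` the
second difference is `t² ∂ᵢ∂ⱼf + o(t²)`, which forces `∂ᵢ∂ⱼf ≤ 0`.
-/

open Filter Asymptotics Topology

section LatticeGroup

variable {α β : Type*} [Lattice α] [AddCommGroup α] [AddLeftMono α]

theorem add_sup_add_of_inf_eq_zero {u v : α} (huv : u ⊓ v = 0) (a : α) :
    (a + u) ⊔ (a + v) = a + u + v := by
  rw [← add_sup, add_assoc, ← inf_add_sup u v, huv, zero_add]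

theorem add_inf_add_of_inf_eq_zero {u v : α} (huv : u ⊓ v = 0) (a : α) :
    (a + u) ⊓ (a + v) = a := by
  rw [← add_inf, huv, add_zero]

theorem submodular_iff_add_add_le [Add β] [LE β] (f : α → β) :
    (∀ x y, f (x ⊔ y) + f (x ⊓ y) ≤ f x + f y) ↔
      ∀ a u v, u ⊓ v = 0 → f (a + u + v) + f a ≤ f (a + u) + f (a + v) := by
  refine ⟨fun h a u v huv => ?_, fun h x y => ?_⟩
  · simpa only [add_sup_add_of_inf_eq_zero huv, add_inf_add_of_inf_eq_zero huv] using
      h (a + u) (a + v)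
  · have hsup : x ⊓ y + (x - x ⊓ y) + (y - x ⊓ y) = x ⊔ y := by
      rw [← add_right_inj (x ⊓ y), inf_add_sup]; abel
    have := h (x ⊓ y) (x - x ⊓ y) (y - x ⊓ y) (by rw [← inf_sub, sub_self])
    rwa [hsup, add_sub_cancel, add_sub_cancel] at this

end LatticeGroup

theorem Pi.single_inf_single_of_ne {ι : Type*} [DecidableEq ι] {i j : ι} (hij : i ≠ j)
    {s t : ℝ} (hs : 0 ≤ s) (ht : 0 ≤ t) : (Pi.single i s : ι → ℝ) ⊓ Pi.single j t = 0 := by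
  ext k
  rcases eq_or_ne k i with rfl | hki
  · simp [hij, hs]
  · rcases eq_or_ne k j with rfl | hkj <;> simp [*]

theorem ContinuousLinearMap.apply_apply_nonpos_of_inf_eq_zero {ι : Type*} [Fintype ι]
    [DecidableEq ι] (B : (ι → ℝ) →L[ℝ] (ι → ℝ) →L[ℝ] ℝ)
    (hB : ∀ i j, i ≠ j → B (Pi.single i 1) (Pi.single j 1) ≤ 0) {u v : ι → ℝ}
    (huv : u ⊓ v = 0) : B u v ≤ 0 := by
  have hu : 0 ≤ u := huv ▸ inf_le_left
  have hv : 0 ≤ v := huv ▸ inf_le_right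
  have hsingle : ∀ i (c : ℝ), Pi.single i c = c • (Pi.single i 1 : ι → ℝ) := fun i c => by
    rw [← Pi.single_smul, smul_eq_mul, mul_one]
  rw [← Finset.univ_sum_single u, ← Finset.univ_sum_single v]
  simp only [map_sum, sum_apply]
  refine Finset.sum_nonpos fun j _ => Finset.sum_nonpos fun i _ => ?_
  rcases eq_or_ne i j with rfl | hij
  · rcases min_eq_iff.1 (congrFun huv i) with ⟨hui, -⟩ | ⟨hvi, -⟩
    · simp [hui]
    · simp [hvi]
  · rw [hsingle i, hsingle j, map_smul, map_smul, smul_apply, smul_eq_mul, smul_eq_mul]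
    exact mul_nonpos_of_nonneg_of_nonpos (hv j) <|
      mul_nonpos_of_nonneg_of_nonpos (hu i) (hB i j hij)

section Calculus

variable {E : Type*} [NormedAddCommGroup E] [NormedSpace ℝ E]

theorem le_of_fderiv_apply_nonpos {g : E → ℝ} (hg : Differentiable ℝ g) {w : E}
    (h : ∀ q, fderiv ℝ g q w ≤ 0) (b : E) : g (b + w) ≤ g b := by
  have hline : ∀ s : ℝ, HasDerivAt (fun s : ℝ => g (b + s • w)) (fderiv ℝ g (b + s • w) w) s :=
    fun s => (hg _).hasFDerivAt.comp_hasDerivAt s <| by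
      simpa using ((hasDerivAt_id s).smul_const w).const_add b
  have hanti : Antitone fun s : ℝ => g (b + s • w) :=
    antitone_of_deriv_nonpos (fun s => (hline s).differentiableAt) fun s => (hline s).deriv ▸ h _
  simpa using hanti zero_le_one

theorem add_add_le_of_fderiv_fderiv_apply_nonpos {f : E → ℝ} (hf : Differentiable ℝ f)
    (hf' : Differentiable ℝ (fderiv ℝ f)) {u v : E}
    (h : ∀ q, fderiv ℝ (fderiv ℝ f) q u v ≤ 0) (a : E) :
    f (a + u + v) + f a ≤ f (a + u) + f (a + v) := by
  have hv : ∀ q, fderiv ℝ f (q + u) v ≤ fderiv ℝ f q v :=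
    le_of_fderiv_apply_nonpos (g := fun q => fderiv ℝ f q v)
      (hf'.clm_apply (differentiable_const v)) fun q => by
        simpa [fderiv_clm_apply (hf' q) (differentiableAt_const v)] using h q
  have hu := le_of_fderiv_apply_nonpos (g := fun q => f (q + u) - f q)
    ((hf.comp (differentiable_id.add_const u)).sub hf) (w := v) (fun q => by
      have hfu : DifferentiableAt ℝ (fun q => f (q + u)) q :=
        (hf _).comp q (differentiableAt_id.add_const u)
      rw [fderiv_fun_sub hfu (hf q)]
      simpa [fderiv_comp_add_right] using hv q) a
  rw [add_right_comm] at hu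
  linarith

theorem nonpos_of_isLittleO_sub_sq_smul {g : ℝ → ℝ} {c : ℝ}
    (hg : (fun h => g h - h ^ 2 • c) =o[𝓝[>] 0] fun h => h ^ 2)
    (hneg : ∀ᶠ h in 𝓝[>] 0, g h ≤ 0) : c ≤ 0 := by
  by_contra! hc
  obtain ⟨h, hh, hgh, hpos⟩ :=
    ((hg.def (half_pos hc)).and (hneg.and self_mem_nhdsWithin)).exists
  simp only [smul_eq_mul, Real.norm_eq_abs, abs_of_nonneg (sq_nonneg h), abs_le] at hh
  nlinarith [pow_pos hpos 2]

theorem fderiv_fderiv_apply_nonpos_of_add_add_le {f : E → ℝ} (hf : Differentiable ℝ f) {x : E}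
    (hx : DifferentiableAt ℝ (fderiv ℝ f) x) {v w : E}
    (h : ∀ a : E, ∀ t : ℝ, 0 < t → f (a + t • v + t • w) + f a ≤ f (a + t • v) + f (a + t • w)) :
    fderiv ℝ (fderiv ℝ f) x v w ≤ 0 := by
  have hsq := convex_univ.isLittleO_alternate_sum_square (fun y _ => (hf y).hasFDerivAt)
    (Set.mem_univ x) hx.hasFDerivAt.hasFDerivWithinAt (v := v) (w := w)
    (by simp) (by simp)
  refine nonpos_of_isLittleO_sub_sq_smul hsq (eventually_mem_nhdsWithin.mono fun t ht => ?_)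
  have hsub := h (x + t • (v + w)) t ht
  have h1 : x + t • (2 • v + 2 • w) = x + t • (v + w) + t • v + t • w := by module
  have h2 : x + t • (2 • v + w) = x + t • (v + w) + t • v := by module
  have h3 : x + t • (v + 2 • w) = x + t • (v + w) + t • w := by module
  rw [h1, h2, h3]
  linarith

end Calculus

/-- A C² function f : ℝⁿ → ℝ is submodular (f x + f y ≥ f (x ⊔ y) + f (x ⊓ y))
iff all mixed second partials ∂²f/∂xᵢ∂xⱼ, i ≠ j, are nonpositive everywhere. -/
theorem stmt1 (n : ℕ) (f : (Fin n → ℝ) → ℝ) (hf : ContDiff ℝ 2 f) :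
    (∀ x y : Fin n → ℝ, f (x ⊔ y) + f (x ⊓ y) ≤ f x + f y) ↔
      (∀ x : Fin n → ℝ, ∀ i j : Fin n, i ≠ j →
        iteratedFDeriv ℝ 2 f x ![Pi.single i 1, Pi.single j 1] ≤ 0) := by
  have hf₁ : Differentiable ℝ f := hf.differentiable two_ne_zero
  have hf₂ : Differentiable ℝ (fderiv ℝ f) :=
    (hf.fderiv_right (m := 1) le_rfl).differentiable one_ne_zero
  simp only [iteratedFDeriv_two_apply, Matrix.cons_val_zero, Matrix.cons_val_one]
  rw [submodular_iff_add_add_le]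
  constructor
  · intro hsub x i j hij
    refine fderiv_fderiv_apply_nonpos_of_add_add_le hf₁ (hf₂ x) fun a t ht => hsub a _ _ ?_
    simpa only [← Pi.single_smul, smul_eq_mul, mul_one] using
      Pi.single_inf_single_of_ne hij ht.le ht.le
  · intro hmix a u v huv
    exact add_add_le_of_fderiv_fderiv_apply_nonpos hf₁ hf₂
      (fun q => (fderiv ℝ (fderiv ℝ f) q).apply_apply_nonpos_of_inf_eq_zero (hmix q) huv) a
end

section
/- Suppose μ₁, μ₂ ∈ (0,1), σ₁, σ₂ > 0, σᵢ² ≤ μᵢ(1−μᵢ), and the intervals [σᵢ²/((1−μᵢ)²+σᵢ²), μᵢ²/(μᵢ²+σᵢ²)] for i=1,2 have a common point p. Then the two-point joint distribution taking (μ₁ − σ₁√(p/(1−p)), μ₂ − σ₂√(p/(1−p))) with probability 1−p and (μ₁ + σ₁√((1−p)/p), μ₂ + σ₂√((1−p)/p)) with probability p is supported in [0,1]² with marginal means μᵢ, marginal variances σᵢ², and E[ξ₁ξ₂] = μ₁μ₂ + σ₁σ₂. -/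
/-!
Both coordinates are the same increasing affine image `μᵢ + σᵢ Z` of one standardized two-point
variable `Z`, equal to `-s` with probability `1 - p` and to `t` with probability `p`, where
`s = √(p / (1 - p))` and `t = √((1 - p) / p)`. The identities `(1 - p) s = p t` and
`(1 - p) s² + p t² = 1` say that `Z` has mean `0` and variance `1`, which gives the means,
variances and `E[ξ₁ξ₂] = μ₁μ₂ + σ₁σ₂`. The interval condition on `p` is exactly `σᵢ s ≤ μᵢ` and
`σᵢ t ≤ 1 - μᵢ`, i.e. both atoms lie in `[0,1]²`.
-/

open MeasureTheory

section TwoPoint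

variable {α : Type*} [MeasurableSpace α] {x y : α}

theorem isProbabilityMeasure_ofReal_smul_dirac_add {p : ℝ} (hp₀ : 0 ≤ p) (hp₁ : p ≤ 1) :
    IsProbabilityMeasure
      (ENNReal.ofReal (1 - p) • Measure.dirac x + ENNReal.ofReal p • Measure.dirac y) := by
  constructor
  simp [← ENNReal.ofReal_add (sub_nonneg.2 hp₁) hp₀]

variable [MeasurableSingletonClass α]

theorem integral_ofReal_smul_dirac_add {E : Type*} [NormedAddCommGroup E] [NormedSpace ℝ E]
    [CompleteSpace E] {a b : ℝ} (ha : 0 ≤ a) (hb : 0 ≤ b) (f : α → E) :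
    ∫ ξ, f ξ ∂(ENNReal.ofReal a • Measure.dirac x + ENNReal.ofReal b • Measure.dirac y) =
      a • f x + b • f y := by
  have integrable_dirac (z : α) (c : ℝ) : Integrable f (ENNReal.ofReal c • Measure.dirac z) :=
    ((integrable_const (f z)).congr (by rw [ae_dirac_eq]; rfl)).smul_measure ENNReal.ofReal_ne_top
  rw [integral_add_measure (integrable_dirac x a) (integrable_dirac y b), integral_smul_measure,
    integral_smul_measure, integral_dirac, integral_dirac, ENNReal.toReal_ofReal ha,
    ENNReal.toReal_ofReal hb]

theorem ae_smul_dirac_add {P : α → Prop} (hx : P x) (hy : P y) (c d : ENNReal) :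
    ∀ᵐ ξ ∂(c • Measure.dirac x + d • Measure.dirac y), P ξ := by
  rw [ae_add_measure_iff]
  constructor <;> refine Measure.ae_smul_measure ?_ _ <;> rw [ae_dirac_eq] <;> assumption

end TwoPoint

section Odds

variable {p : ℝ}

theorem one_sub_mul_sqrt_odds (hp : p ≤ 1) : (1 - p) * √(p / (1 - p)) = √(p * (1 - p)) := by
  nth_rw 1 [← Real.sqrt_sq (sub_nonneg.2 hp)]
  rw [← Real.sqrt_mul (sq_nonneg _)]
  rcases eq_or_ne (1 - p) 0 with h | h
  · simp [h]
  · congr 1; field_simp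

theorem one_sub_mul_sqrt_odds_eq_mul_sqrt_inv_odds (hp₀ : 0 ≤ p) (hp₁ : p ≤ 1) :
    (1 - p) * √(p / (1 - p)) = p * √((1 - p) / p) := by
  have := one_sub_mul_sqrt_odds (p := 1 - p) (by linarith)
  rw [sub_sub_cancel, mul_comm (1 - p)] at this
  rw [one_sub_mul_sqrt_odds hp₁, this]

theorem one_sub_mul_sqrt_odds_sq_add (hp₀ : 0 < p) (hp₁ : p < 1) :
    (1 - p) * √(p / (1 - p)) ^ 2 + p * √((1 - p) / p) ^ 2 = 1 := by
  have : 0 < 1 - p := sub_pos.2 hp₁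
  rw [Real.sq_sqrt (by positivity), Real.sq_sqrt (by positivity)]
  field_simp
  ring

theorem mul_sqrt_odds_le {μ σ : ℝ} (hμ : 0 ≤ μ) (hσ : 0 < σ) (hp₁ : p < 1)
    (hp : p ≤ μ ^ 2 / (μ ^ 2 + σ ^ 2)) : σ * √(p / (1 - p)) ≤ μ := by
  rw [le_div_iff₀ (by positivity)] at hp
  rw [← Real.sqrt_sq hσ.le, ← Real.sqrt_mul (sq_nonneg _), Real.sqrt_le_left hμ, ← mul_div_assoc,
    div_le_iff₀ (sub_pos.2 hp₁)]
  linarith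

theorem mul_sqrt_inv_odds_le {μ σ : ℝ} (hμ : μ ≤ 1) (hσ : 0 < σ) (hp₀ : 0 < p)
    (hp : σ ^ 2 / ((1 - μ) ^ 2 + σ ^ 2) ≤ p) : σ * √((1 - p) / p) ≤ 1 - μ := by
  -- the reflection `μ ↦ 1 - μ`, `p ↦ 1 - p` swaps the two bounds
  have hp' : 1 - p ≤ (1 - μ) ^ 2 / ((1 - μ) ^ 2 + σ ^ 2) := by
    have : (1 - μ) ^ 2 / ((1 - μ) ^ 2 + σ ^ 2) = 1 - σ ^ 2 / ((1 - μ) ^ 2 + σ ^ 2) := by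
      field_simp; ring
    linarith
  simpa only [sub_sub_cancel] using mul_sqrt_odds_le (sub_nonneg.2 hμ) hσ (by linarith) hp'

theorem mem_Ioo_of_mem_Icc_odds_bounds {μ σ : ℝ} (hσ : 0 < σ)
    (hp : p ∈ Set.Icc (σ ^ 2 / ((1 - μ) ^ 2 + σ ^ 2)) (μ ^ 2 / (μ ^ 2 + σ ^ 2))) :
    p ∈ Set.Ioo 0 1 := by
  refine ⟨lt_of_lt_of_le (by positivity) hp.1, lt_of_le_of_lt hp.2 ?_⟩
  rw [div_lt_one (by positivity)]
  linarith [pow_pos hσ 2]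

variable {μ σ : ℝ} (hμ : μ ∈ Set.Icc 0 1) (hσ : 0 < σ)
  (hp : p ∈ Set.Icc (σ ^ 2 / ((1 - μ) ^ 2 + σ ^ 2)) (μ ^ 2 / (μ ^ 2 + σ ^ 2)))
include hμ hσ hp

theorem sub_mul_sqrt_odds_mem_Icc : μ - σ * √(p / (1 - p)) ∈ Set.Icc 0 1 := by
  have := mul_sqrt_odds_le hμ.1 hσ (mem_Ioo_of_mem_Icc_odds_bounds hσ hp).2 hp.2
  constructor <;> nlinarith [hμ.2, Real.sqrt_nonneg (p / (1 - p))]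

theorem add_mul_sqrt_inv_odds_mem_Icc : μ + σ * √((1 - p) / p) ∈ Set.Icc 0 1 := by
  have := mul_sqrt_inv_odds_le hμ.2 hσ (mem_Ioo_of_mem_Icc_odds_bounds hσ hp).1 hp.1
  constructor <;> nlinarith [hμ.1, Real.sqrt_nonneg ((1 - p) / p)]

end Odds

theorem stmt14_general (μ₁ μ₂ σ₁ σ₂ p : ℝ)
    (hμ₁ : μ₁ ∈ Set.Ioo (0 : ℝ) 1) (hμ₂ : μ₂ ∈ Set.Ioo (0 : ℝ) 1)
    (hσ₁0 : 0 < σ₁) (hσ₂0 : 0 < σ₂)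
    (hp₁ : p ∈ Set.Icc (σ₁ ^ 2 / ((1 - μ₁) ^ 2 + σ₁ ^ 2)) (μ₁ ^ 2 / (μ₁ ^ 2 + σ₁ ^ 2)))
    (hp₂ : p ∈ Set.Icc (σ₂ ^ 2 / ((1 - μ₂) ^ 2 + σ₂ ^ 2)) (μ₂ ^ 2 / (μ₂ ^ 2 + σ₂ ^ 2))) :
    ∃ P : Measure (ℝ × ℝ),
      P = (ENNReal.ofReal (1 - p)) • Measure.dirac
            (μ₁ - σ₁ * Real.sqrt (p / (1 - p)), μ₂ - σ₂ * Real.sqrt (p / (1 - p))) +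
          (ENNReal.ofReal p) • Measure.dirac
            (μ₁ + σ₁ * Real.sqrt ((1 - p) / p), μ₂ + σ₂ * Real.sqrt ((1 - p) / p)) ∧
      IsProbabilityMeasure P ∧
      (∀ᵐ ξ ∂P, ξ.1 ∈ Set.Icc (0 : ℝ) 1 ∧ ξ.2 ∈ Set.Icc (0 : ℝ) 1) ∧
      (∫ ξ, ξ.1 ∂P = μ₁) ∧ (∫ ξ, ξ.2 ∂P = μ₂) ∧
      (∫ ξ, (ξ.1 - μ₁) ^ 2 ∂P = σ₁ ^ 2) ∧ (∫ ξ, (ξ.2 - μ₂) ^ 2 ∂P = σ₂ ^ 2) ∧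
      (∫ ξ, ξ.1 * ξ.2 ∂P = μ₁ * μ₂ + σ₁ * σ₂) := by
  obtain ⟨hp_pos, hp_lt_one⟩ := mem_Ioo_of_mem_Icc_odds_bounds hσ₁0 hp₁
  have hbal := one_sub_mul_sqrt_odds_eq_mul_sqrt_inv_odds hp_pos.le hp_lt_one.le
  have hnorm := one_sub_mul_sqrt_odds_sq_add hp_pos hp_lt_one
  have hμ₁' := Set.Ioo_subset_Icc_self hμ₁
  have hμ₂' := Set.Ioo_subset_Icc_self hμ₂
  refine ⟨_, rfl, isProbabilityMeasure_ofReal_smul_dirac_add hp_pos.le hp_lt_one.le,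
    ae_smul_dirac_add
      ⟨sub_mul_sqrt_odds_mem_Icc hμ₁' hσ₁0 hp₁, sub_mul_sqrt_odds_mem_Icc hμ₂' hσ₂0 hp₂⟩
      ⟨add_mul_sqrt_inv_odds_mem_Icc hμ₁' hσ₁0 hp₁, add_mul_sqrt_inv_odds_mem_Icc hμ₂' hσ₂0 hp₂⟩
      _ _, ?_, ?_, ?_, ?_, ?_⟩ <;>
    simp only [integral_ofReal_smul_dirac_add (sub_nonneg.2 hp_lt_one.le) hp_pos.le, smul_eq_mul]
  · linear_combination -σ₁ * hbal
  · linear_combination -σ₂ * hbal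
  · linear_combination σ₁ ^ 2 * hnorm
  · linear_combination σ₂ ^ 2 * hnorm
  · linear_combination σ₁ * σ₂ * hnorm - (σ₁ * μ₂ + σ₂ * μ₁) * hbal

/-- The two-point joint distribution with perfect positive dependence is
supported in [0,1]², has marginal means μᵢ, marginal variances σᵢ², and
E[ξ₁ξ₂] = μ₁μ₂ + σ₁σ₂. -/
theorem stmt14 (μ₁ μ₂ σ₁ σ₂ p : ℝ)
    (hμ₁ : μ₁ ∈ Set.Ioo (0 : ℝ) 1) (hμ₂ : μ₂ ∈ Set.Ioo (0 : ℝ) 1)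
    (hσ₁0 : 0 < σ₁) (hσ₂0 : 0 < σ₂)
    (hσ₁ : σ₁ ^ 2 ≤ μ₁ * (1 - μ₁)) (hσ₂ : σ₂ ^ 2 ≤ μ₂ * (1 - μ₂))
    (hp₁ : p ∈ Set.Icc (σ₁ ^ 2 / ((1 - μ₁) ^ 2 + σ₁ ^ 2)) (μ₁ ^ 2 / (μ₁ ^ 2 + σ₁ ^ 2)))
    (hp₂ : p ∈ Set.Icc (σ₂ ^ 2 / ((1 - μ₂) ^ 2 + σ₂ ^ 2)) (μ₂ ^ 2 / (μ₂ ^ 2 + σ₂ ^ 2))) :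
    ∃ P : Measure (ℝ × ℝ),
      P = (ENNReal.ofReal (1 - p)) • Measure.dirac
            (μ₁ - σ₁ * Real.sqrt (p / (1 - p)), μ₂ - σ₂ * Real.sqrt (p / (1 - p))) +
          (ENNReal.ofReal p) • Measure.dirac
            (μ₁ + σ₁ * Real.sqrt ((1 - p) / p), μ₂ + σ₂ * Real.sqrt ((1 - p) / p)) ∧
      IsProbabilityMeasure P ∧
      (∀ᵐ ξ ∂P, ξ.1 ∈ Set.Icc (0 : ℝ) 1 ∧ ξ.2 ∈ Set.Icc (0 : ℝ) 1) ∧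
      (∫ ξ, ξ.1 ∂P = μ₁) ∧ (∫ ξ, ξ.2 ∂P = μ₂) ∧
      (∫ ξ, (ξ.1 - μ₁) ^ 2 ∂P = σ₁ ^ 2) ∧ (∫ ξ, (ξ.2 - μ₂) ^ 2 ∂P = σ₂ ^ 2) ∧
      (∫ ξ, ξ.1 * ξ.2 ∂P = μ₁ * μ₂ + σ₁ * σ₂) :=
  stmt14_general μ₁ μ₂ σ₁ σ₂ p hμ₁ hμ₂ hσ₁0 hσ₂0 hp₁ hp₂
end
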